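/- arXiv:2112.00073 — 5 statements merged into one kernel-verified Lean document; each statement's English description precedes it below -/
import Mathlib

section
/- Let a > 0, E ∈ ℝ, κ ∈ ℤ + 1/2 with κ < 0, and set λ := -1/2 + κ - a and E = 1. Then Θ(τ) = -θ(τ) + π is an orbit of the system θ' = sin θ, Θ' = -2a sin θ cos θ cos Θ + 2aE sin²θ sin Θ - 2κ sin Θ + 2λ sin θ. -/
open Real

/-- The `a`-terms cancel by `sin² + cos² = 1`, the `κ`-terms because `sin (π - x) = sin x`. -/
theorem theta_rhs_at_pi_sub_eq_neg_sin (a κ x : ℝ) :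
    -2*a*sin x*cos x*cos (-x + π) + 2*a*1*(sin x)^2 * sin (-x + π)
      - 2*κ*sin (-x + π) + 2*(-1/2 + κ - a)*sin x = -sin x := by
  rw [neg_add_eq_sub, sin_pi_sub, cos_pi_sub]
  linear_combination 2*a*sin x*sin_sq_add_cos_sq x

theorem stmt1_general (a E κ lam : ℝ) (hlam : lam = -1/2 + κ - a) (hE : E = 1)
    (θ : ℝ → ℝ) (hθ : ∀ τ, HasDerivAt θ (Real.sin (θ τ)) τ) :
    ∀ τ, HasDerivAt (fun τ => -θ τ + Real.pi)
      (-2*a*Real.sin (θ τ)*Real.cos (θ τ)*Real.cos (-θ τ + Real.pi)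
        + 2*a*E*(Real.sin (θ τ))^2 * Real.sin (-θ τ + Real.pi)
        - 2*κ*Real.sin (-θ τ + Real.pi) + 2*lam*Real.sin (θ τ)) τ := by
  intro τ
  rw [hlam, hE, theta_rhs_at_pi_sub_eq_neg_sin]
  exact (hθ τ).neg.add_const π

/-- For `κ < 0` half-integer, `E = 1`, `λ = -1/2 + κ - a`, the curve `Θ = -θ + π`
is an orbit of the Θ-system. -/
theorem stmt1 (a E κ lam : ℝ) (ha : 0 < a) (hκhalf : ∃ n : ℤ, κ = (n : ℝ) + 1/2)
    (hκneg : κ < 0) (hlam : lam = -1/2 + κ - a) (hE : E = 1)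
    (θ : ℝ → ℝ) (hθ : ∀ τ, HasDerivAt θ (Real.sin (θ τ)) τ) :
    ∀ τ, HasDerivAt (fun τ => -θ τ + Real.pi)
      (-2*a*Real.sin (θ τ)*Real.cos (θ τ)*Real.cos (-θ τ + Real.pi)
        + 2*a*E*(Real.sin (θ τ))^2 * Real.sin (-θ τ + Real.pi)
        - 2*κ*Real.sin (-θ τ + Real.pi) + 2*lam*Real.sin (θ τ)) τ :=
  stmt1_general a E κ lam hlam hE θ hθ
end

section
/- For all ξ ∈ [-π/2, π/2] and all γ ∈ [-1/2, 0]: cos ξ · (-2 + 2γ sin ξ + cos ξ + 2(1 - 1/√2)) ≤ 0. -/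
/-!
Since `|2γ| ≤ 1`, the term `2γ sin ξ` is at most `|sin ξ|`, and `cos ξ + |sin ξ| ≤ √2` because
`(a + b)² ≤ 2 (a² + b²)`. As `2 (1 - 1/√2) = 2 - √2`, the second factor is therefore at most `0`,
while `cos ξ ≥ 0` on `[-π/2, π/2]`.
-/

open Real

lemma add_le_sqrt_two_of_sq_add_sq_eq_one {a b : ℝ} (h : a ^ 2 + b ^ 2 = 1) : a + b ≤ √2 :=
  Real.le_sqrt_of_sq_le (by nlinarith [sq_nonneg (a - b)])

lemma Real.cos_add_abs_sin_le_sqrt_two (x : ℝ) : cos x + |sin x| ≤ √2 :=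
  add_le_sqrt_two_of_sq_add_sq_eq_one (by rw [sq_abs, add_comm, sin_sq_add_cos_sq])

lemma mul_le_abs_of_abs_le_one {c a : ℝ} (hc : |c| ≤ 1) : c * a ≤ |a| :=
  calc c * a ≤ |c * a| := le_abs_self _
    _ = |c| * |a| := abs_mul c a
    _ ≤ |a| := mul_le_of_le_one_left (abs_nonneg a) hc

lemma two_mul_one_sub_one_div_sqrt_two : 2 * (1 - 1 / √2) = 2 - √2 := by
  rw [mul_sub, mul_one, mul_one_div, div_sqrt]

/-- Key trigonometric inequality in the barrier proof for `Ω = π/2`,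
with `a_max = 1 - 1/√2`. -/
theorem stmt6 (ξ γ : ℝ) (hξ : ξ ∈ Set.Icc (-(Real.pi/2)) (Real.pi/2))
    (hγ : γ ∈ Set.Icc (-(1/2):ℝ) 0) :
    Real.cos ξ * (-2 + 2*γ*Real.sin ξ + Real.cos ξ + 2*(1 - 1/Real.sqrt 2)) ≤ 0 := by
  have hcos : 0 ≤ cos ξ := cos_nonneg_of_mem_Icc hξ
  have h2γ : |2 * γ| ≤ 1 := abs_le.2 ⟨by linarith [hγ.1], by linarith [hγ.2]⟩
  have hfactor : -2 + 2 * γ * sin ξ + cos ξ + 2 * (1 - 1 / √2) ≤ 0 := by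
    rw [two_mul_one_sub_one_div_sqrt_two]
    linarith [mul_le_abs_of_abs_le_one (a := sin ξ) h2γ, cos_add_abs_sin_le_sqrt_two ξ]
  exact mul_nonpos_of_nonneg_of_nonpos hcos hfactor
end

section
/- Let γ ∈ (-√3/2, 0), k a negative integer, M ≥ 1 an integer, ρ := √(k² - γ²). Define μ := M / (sgn(k)√(ρ² + γ²) - √((M+ρ)² + γ²)). Then μ + 1 > 0, i.e. -μ < 1. -/
/-- Sign condition for `k < 0`: `μ + 1 > 0`, where
`μ = M/(sgn(k)√(ρ²+γ²) - √((M+ρ)²+γ²))`. -/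
theorem stmt8 (γ : ℝ) (hγ : γ ∈ Set.Ioo (-(Real.sqrt 3/2)) 0)
    (k : ℤ) (hk : k < 0) (M : ℕ) (hM : 1 ≤ M)
    (ρ μ : ℝ) (hρ : ρ = Real.sqrt ((k:ℝ)^2 - γ^2))
    (hμ : μ = (M:ℝ) / ((Int.sign k : ℝ) * Real.sqrt (ρ^2 + γ^2)
        - Real.sqrt (((M:ℝ)+ρ)^2 + γ^2))) :
    0 < μ + 1 := by
  obtain ⟨hγ1, hγ2⟩ := hγ
  have hsign : (Int.sign k : ℝ) = -1 := by
    rw [Int.sign_eq_neg_one_of_neg hk]; norm_num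
  have hk1 : (k : ℝ) ≤ -1 := by exact_mod_cast (show k ≤ -1 by omega)
  have hγsq : γ^2 < 1 := by
    have h3 : Real.sqrt 3 / 2 ≤ 1 := by
      nlinarith [Real.sq_sqrt (by norm_num : (3:ℝ) ≥ 0),
        Real.sqrt_nonneg 3]
    nlinarith
  have hksq : 1 ≤ (k:ℝ)^2 := by nlinarith
  have hρnn : 0 ≤ ρ := hρ ▸ Real.sqrt_nonneg _
  have hρsq : ρ^2 = (k:ℝ)^2 - γ^2 := by
    rw [hρ, Real.sq_sqrt (by nlinarith)]
  have hA : Real.sqrt (ρ^2 + γ^2) = -(k:ℝ) := by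
    rw [hρsq]
    have : (k:ℝ)^2 - γ^2 + γ^2 = (-(k:ℝ))^2 := by ring
    rw [this, Real.sqrt_sq (by linarith)]
  have hM1 : (1:ℝ) ≤ M := by exact_mod_cast hM
  have hB : (M:ℝ) + ρ ≤ Real.sqrt (((M:ℝ)+ρ)^2 + γ^2) := by
    have := Real.sqrt_le_sqrt (show ((M:ℝ)+ρ)^2 ≤ ((M:ℝ)+ρ)^2 + γ^2 by nlinarith)
    rwa [Real.sqrt_sq (by linarith)] at this
  set B := Real.sqrt (((M:ℝ)+ρ)^2 + γ^2)
  have hD : (Int.sign k : ℝ) * Real.sqrt (ρ^2 + γ^2) - B = (k:ℝ) - B := by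
    rw [hsign, hA]; ring
  rw [hμ, hD]
  have hDneg : (k:ℝ) - B < 0 := by linarith
  have hnum : (M:ℝ) + ((k:ℝ) - B) < 0 := by linarith
  have : 0 < ((M:ℝ) + ((k:ℝ) - B)) / ((k:ℝ) - B) := div_pos_of_neg_of_neg hnum hDneg
  have heq : (M:ℝ) / ((k:ℝ) - B) + 1 = ((M:ℝ) + ((k:ℝ) - B)) / ((k:ℝ) - B) := by
    field_simp [ne_of_lt hDneg]
  linarith [heq ▸ this]
end

section
/- Let γ ∈ (-1/2, 0), k a positive integer, M ≥ 2 an integer, ρ := √(k² - γ²), and μ := M / (√(ρ² + γ²) - √((M+ρ)² + γ²)). Then μ + 1 < 0 and μ + M/(M-1) > 0. -/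
/-!
With `r = √(ρ² + γ²)`, the difference `d = √((M + ρ)² + γ²) - r` of values of the hypotenuse
function `t ↦ √(t² + γ²)`, whose slope is `< 1` when `γ ≠ 0`, satisfies `d < M`; it also satisfies
`M - 1 < d` as soon as `r - ρ < 1/2`. For `ρ = √(k² - γ²)` we have `r = k` and
`k - ρ < 1/2` because `|γ| < 1/2 ≤ k`. Then `μ = -M / d` lies strictly between `-M/(M-1)` and `-1`.
-/

open Real

lemma sqrt_shift_sub_sqrt_lt {ρ γ m : ℝ} (hγ : γ ≠ 0) (hm : 0 < m) :
    √((m + ρ) ^ 2 + γ ^ 2) - √(ρ ^ 2 + γ ^ 2) < m := by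
  have hρr : ρ < √(ρ ^ 2 + γ ^ 2) := by
    refine (le_abs_self ρ).trans_lt ?_
    rw [← sqrt_sq_eq_abs]
    exact sqrt_lt_sqrt (sq_nonneg ρ) (lt_add_of_pos_right _ (by positivity))
  set r := √(ρ ^ 2 + γ ^ 2)
  have hr : r ^ 2 = ρ ^ 2 + γ ^ 2 := sq_sqrt (by positivity)
  rw [sub_lt_iff_lt_add, sqrt_lt' (add_pos_of_pos_of_nonneg hm (sqrt_nonneg _))]
  nlinarith

lemma sub_one_lt_sqrt_shift_sub_sqrt {ρ γ m : ℝ} (hm : 1 ≤ m)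
    (hρ : √(ρ ^ 2 + γ ^ 2) - ρ < 1 / 2) :
    m - 1 < √((m + ρ) ^ 2 + γ ^ 2) - √(ρ ^ 2 + γ ^ 2) := by
  set r := √(ρ ^ 2 + γ ^ 2)
  have hr0 : 0 ≤ r := sqrt_nonneg _
  have hr : r ^ 2 = ρ ^ 2 + γ ^ 2 := sq_sqrt (by positivity)
  rw [lt_sub_iff_add_lt, lt_sqrt (by linarith)]
  nlinarith

lemma sub_half_lt_sqrt_sq_sub_sq {k γ : ℝ} (hk : 1 / 2 ≤ k) (hγ : γ ^ 2 < 1 / 4) :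
    k - 1 / 2 < √(k ^ 2 - γ ^ 2) := by
  rw [lt_sqrt (by linarith)]
  nlinarith

lemma div_sub_add_one_neg_and_add_div_pos {m a b : ℝ} (hm : 1 < m) (hlo : m - 1 < b - a) (hhi : b - a < m) :
    m / (a - b) + 1 < 0 ∧ 0 < m / (a - b) + m / (m - 1) := by
  have hab : a - b < 0 := by linarith
  have hm1 : 0 < m - 1 := by linarith
  constructor
  · rw [div_add_one hab.ne]
    exact div_neg_of_pos_of_neg (by linarith) hab
  · rw [div_add_div _ _ hab.ne hm1.ne']
    exact div_pos_of_neg_of_neg (by nlinarith) (mul_neg_of_neg_of_pos hab hm1)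

/-- Sign conditions for `k > 0`, `M ≥ 2`: `μ + 1 < 0` and `μ + M/(M-1) > 0`. -/
theorem stmt9 (γ : ℝ) (hγ : γ ∈ Set.Ioo (-(1/2):ℝ) 0)
    (k : ℤ) (hk : 0 < k) (M : ℕ) (hM : 2 ≤ M)
    (ρ μ : ℝ) (hρ : ρ = Real.sqrt ((k:ℝ)^2 - γ^2))
    (hμ : μ = (M:ℝ) / (Real.sqrt (ρ^2 + γ^2) - Real.sqrt (((M:ℝ)+ρ)^2 + γ^2))) :
    μ + 1 < 0 ∧ 0 < μ + (M:ℝ)/((M:ℝ)-1) := by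
  obtain ⟨hγ_lo, hγ_hi⟩ := hγ
  have hk1 : (1 : ℝ) ≤ k := by exact_mod_cast hk
  have hM2 : (2 : ℝ) ≤ M := by exact_mod_cast hM
  have hγsq : γ ^ 2 < 1 / 4 := by nlinarith
  have hhypot : √(ρ ^ 2 + γ ^ 2) = k := by
    rw [hρ, sq_sqrt (by nlinarith), sub_add_cancel, sqrt_sq (by linarith)]
  have hρk : √(ρ ^ 2 + γ ^ 2) - ρ < 1 / 2 := by
    have := sub_half_lt_sqrt_sq_sub_sq (k := k) (by linarith) hγsq
    rw [hhypot, hρ]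
    linarith
  subst hμ
  exact div_sub_add_one_neg_and_add_div_pos (by linarith) (sub_one_lt_sqrt_shift_sub_sqrt (by linarith) hρk)
    (sqrt_shift_sub_sqrt_lt hγ_hi.ne (by linarith))
end

section
/- Let z : ℝ → ℝ be differentiable and P : ℝ → ℝ continuous, with z'(τ) ≤ z(τ)P(τ) for all τ. Suppose ∫_{-∞}^{τ} P(s) ds = -∞ for each τ (i.e., exp(∫_{τ₀}^τ P) → 0 as τ₀ → -∞) and z is bounded as τ → -∞. Then z(τ) ≤ 0 for all τ ∈ ℝ. -/
/-!
With the integrating factor `exp (-∫_{τ₀}^t P)`, the inequality `z' ≤ z P` says that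
`z(t) exp (-∫_{τ₀}^t P)` is antitone, whence `z τ ≤ z τ₀ · exp (∫_{τ₀}^τ P)` for `τ₀ ≤ τ`.
As `τ₀ → -∞` the factor `z τ₀` stays bounded while the exponential tends to `0`.
-/

open Filter Real intervalIntegral

section Gronwall

variable {z P : ℝ → ℝ}

theorem hasDerivAt_mul_exp_neg_integral (hz : Differentiable ℝ z) (hP : Continuous P)
    (τ₀ t : ℝ) :
    HasDerivAt (fun t => z t * exp (-∫ s in τ₀..t, P s))
      ((deriv z t - z t * P t) * exp (-∫ s in τ₀..t, P s)) t := by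
  have hint : HasDerivAt (fun t => ∫ s in τ₀..t, P s) (P t) t :=
    integral_hasDerivAt_right (hP.intervalIntegrable τ₀ t)
      hP.aestronglyMeasurable.stronglyMeasurableAtFilter hP.continuousAt
  have hfactor : HasDerivAt (fun t => exp (-∫ s in τ₀..t, P s))
      (exp (-∫ s in τ₀..t, P s) * -P t) t := hint.neg.exp
  exact ((hz t).hasDerivAt.mul hfactor).congr_deriv (by ring)

theorem antitone_mul_exp_neg_integral (hz : Differentiable ℝ z) (hP : Continuous P)
    (hineq : ∀ t, deriv z t ≤ z t * P t) (τ₀ : ℝ) :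
    Antitone fun t => z t * exp (-∫ s in τ₀..t, P s) := by
  apply antitone_of_deriv_nonpos
  · exact fun t => (hasDerivAt_mul_exp_neg_integral hz hP τ₀ t).differentiableAt
  · intro t
    rw [(hasDerivAt_mul_exp_neg_integral hz hP τ₀ t).deriv]
    exact mul_nonpos_of_nonpos_of_nonneg (sub_nonpos.mpr (hineq t)) (exp_pos _).le

theorem le_mul_exp_integral_of_deriv_le_mul (hz : Differentiable ℝ z) (hP : Continuous P)
    (hineq : ∀ t, deriv z t ≤ z t * P t) {τ₀ τ : ℝ} (hτ : τ₀ ≤ τ) :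
    z τ ≤ z τ₀ * exp (∫ s in τ₀..τ, P s) := by
  have hanti := antitone_mul_exp_neg_integral hz hP hineq τ₀ hτ
  simp only [integral_same, neg_zero, exp_zero, mul_one] at hanti
  calc z τ = z τ * exp (-∫ s in τ₀..τ, P s) * exp (∫ s in τ₀..τ, P s) := by
        rw [mul_assoc, ← exp_add, neg_add_cancel, exp_zero, mul_one]
    _ ≤ z τ₀ * exp (∫ s in τ₀..τ, P s) := by gcongr

end Gronwall

/-- Grönwall-type lemma: if `z' ≤ z P`, the exponential factor
`exp(∫_{τ₀}^τ P)` tends to `0` as `τ₀ → -∞`, and `z` is bounded near `-∞`,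
then `z ≤ 0` everywhere. -/
theorem stmt13 (z P : ℝ → ℝ) (hz : Differentiable ℝ z) (hP : Continuous P)
    (hineq : ∀ τ, deriv z τ ≤ z τ * P τ)
    (hexp : ∀ τ : ℝ, Filter.Tendsto (fun τ₀ => Real.exp (∫ s in τ₀..τ, P s))
      Filter.atBot (nhds 0))
    (hbdd : ∃ Cb : ℝ, ∀ᶠ τ in Filter.atBot, |z τ| ≤ Cb) :
    ∀ τ, z τ ≤ 0 := by
  obtain ⟨Cb, hCb⟩ := hbdd
  intro τ
  have hbound : ∀ᶠ τ₀ in atBot, z τ ≤ Cb * exp (∫ s in τ₀..τ, P s) := by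
    filter_upwards [hCb, eventually_le_atBot τ] with τ₀ hzτ₀ hτ₀
    calc z τ ≤ z τ₀ * exp (∫ s in τ₀..τ, P s) :=
          le_mul_exp_integral_of_deriv_le_mul hz hP hineq hτ₀
      _ ≤ Cb * exp (∫ s in τ₀..τ, P s) := by gcongr; exact (le_abs_self _).trans hzτ₀
  have hlim : Tendsto (fun τ₀ => Cb * exp (∫ s in τ₀..τ, P s)) atBot (nhds 0) := by
    simpa using (hexp τ).const_mul Cb
  exact ge_of_tendsto hlim hbound
end
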